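/- arXiv:1601.05964 — 3 statements merged into one kernel-verified Lean document; each statement's English description precedes it below -/
import Mathlib

section
/- Let X be a compact Hausdorff space and M a unital C*-algebra with faithful tracial state τ. Let C_σ(X,M) denote the set of functions f : X → M that are bounded in the C*-norm and continuous for the 2-norm topology on M. Then C_σ(X,M) is a unital C*-subalgebra of the C*-algebra of all bounded functions X → M with the supremum norm. -/
/-!
Cauchy–Schwarz for `(a, b) ↦ τ (a* b)` makes `‖·‖₂` a seminorm. Positivity of `τ` applied to
`b* (‖a‖² - a* a) b ≥ 0` gives `‖ab‖₂ ≤ ‖a‖ ‖b‖₂`, and the trace property (`‖x*‖₂ = ‖x‖₂`) turns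
this into `‖ab‖₂ ≤ ‖a‖₂ ‖b‖`; with `b = 1`, `‖a‖₂ ≤ ‖a‖`. Hence products of norm-bounded
2-norm continuous functions are 2-norm continuous, and uniform limits of such functions are too.
-/

/-- The `2`-norm `‖a‖_{2,τ} = τ(a*a)^{1/2}` associated to a tracial state `τ`. -/
noncomputable def twoNorm {M : Type*} [NormedRing M] [StarRing M] [NormedAlgebra ℂ M]
    (τ : M →ₗ[ℂ] ℂ) (a : M) : ℝ :=
  Real.sqrt (τ (star a * a)).re

/-- `f : X → M` is continuous for the 2-norm topology on `M`. -/
def Cont2 {X M : Type*} [TopologicalSpace X] [NormedRing M] [StarRing M] [NormedAlgebra ℂ M]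
    (τ : M →ₗ[ℂ] ℂ) (f : X → M) : Prop :=
  ∀ x₀ : X, ∀ ε > (0 : ℝ), ∃ U ∈ nhds x₀, ∀ x ∈ U, twoNorm τ (f x - f x₀) < ε

/-- `C_σ(X,M)`: the set of C*-norm bounded, 2-norm continuous functions `X → M`. -/
def CsigmaSet (X : Type*) {M : Type*} [TopologicalSpace X] [NormedRing M] [StarRing M]
    [NormedAlgebra ℂ M] (τ : M →ₗ[ℂ] ℂ) : Set (X → M) :=
  {f | (∃ C : ℝ, ∀ x, ‖f x‖ ≤ C) ∧ Cont2 τ f}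

open Filter Topology

section TwoNorm

variable {M : Type*} [NormedRing M] [StarRing M] [NormedAlgebra ℂ M] (τ : M →ₗ[ℂ] ℂ)

noncomputable def twoNormSq (a : M) : ℝ := (τ (star a * a)).re

lemma twoNorm_eq_sqrt (a : M) : twoNorm τ a = √(twoNormSq τ a) := rfl

lemma twoNorm_nonneg (a : M) : 0 ≤ twoNorm τ a := Real.sqrt_nonneg _

lemma twoNorm_zero : twoNorm τ (0 : M) = 0 := by simp [twoNorm]

lemma twoNorm_neg (a : M) : twoNorm τ (-a) = twoNorm τ a := by simp [twoNorm]

lemma twoNormSq_add (hstar : ∀ a : M, τ (star a) = starRingEnd ℂ (τ a)) (a b : M) :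
    twoNormSq τ (a + b) = twoNormSq τ a + 2 * (τ (star a * b)).re + twoNormSq τ b := by
  have hswap : (τ (star b * a)).re = (τ (star a * b)).re := by
    rw [← star_star a, ← star_mul, hstar, star_star, Complex.conj_re]
  have hexpand : star (a + b) * (a + b) = star a * a + star a * b + star b * a + star b * b := by
    rw [star_add]; noncomm_ring
  simp only [twoNormSq, hexpand, map_add, Complex.add_re, hswap]
  ring

lemma twoNormSq_smul [StarModule ℂ M] (c : ℂ) (a : M) :
    twoNormSq τ (c • a) = ‖c‖ ^ 2 * twoNormSq τ a := by
  have h : star (c • a) * (c • a) = ((‖c‖ ^ 2 : ℝ) : ℂ) • (star a * a) := by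
    rw [star_smul, smul_mul_assoc, mul_smul_comm, smul_smul, Complex.star_def, mul_comm,
      Complex.mul_conj, Complex.normSq_eq_norm_sq, Complex.ofReal_pow]
  rw [twoNormSq, h, map_smul, smul_eq_mul, Complex.re_ofReal_mul, twoNormSq]

lemma twoNorm_smul [StarModule ℂ M] (c : ℂ) (a : M) :
    twoNorm τ (c • a) = ‖c‖ * twoNorm τ a := by
  rw [twoNorm_eq_sqrt, twoNormSq_smul, Real.sqrt_mul (by positivity), Real.sqrt_sq (norm_nonneg c),
    twoNorm_eq_sqrt]

/-- Cauchy–Schwarz for the sesquilinear form `(a, b) ↦ τ (a* b)`. -/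
lemma re_map_star_mul_le [StarModule ℂ M]
    (hpos : ∀ a : M, 0 ≤ twoNormSq τ a)
    (hstar : ∀ a : M, τ (star a) = starRingEnd ℂ (τ a)) (a b : M) :
    (τ (star a * b)).re ≤ twoNorm τ a * twoNorm τ b := by
  set R := (τ (star a * b)).re
  have hquad : ∀ t : ℝ, 0 ≤ twoNormSq τ b * (t * t) + (2 * R) * t + twoNormSq τ a := by
    intro t
    have h := hpos (a + (t : ℂ) • b)
    rw [twoNormSq_add τ hstar, twoNormSq_smul, mul_smul_comm, map_smul, smul_eq_mul,
      Complex.re_ofReal_mul, Complex.norm_real, Real.norm_eq_abs, sq_abs] at h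
    linarith
  have hdiscr := discrim_le_zero hquad
  have ha : 0 ≤ twoNormSq τ a := hpos a
  rw [discrim] at hdiscr
  rw [twoNorm_eq_sqrt, twoNorm_eq_sqrt, ← Real.sqrt_mul ha]
  exact Real.le_sqrt_of_sq_le (by nlinarith)

lemma twoNorm_add_le [StarModule ℂ M]
    (hpos : ∀ a : M, 0 ≤ twoNormSq τ a)
    (hstar : ∀ a : M, τ (star a) = starRingEnd ℂ (τ a)) (a b : M) :
    twoNorm τ (a + b) ≤ twoNorm τ a + twoNorm τ b := by
  have ha : 0 ≤ twoNormSq τ a := hpos a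
  have hb : 0 ≤ twoNormSq τ b := hpos b
  have hcs := re_map_star_mul_le τ hpos hstar a b
  rw [twoNorm_eq_sqrt, twoNorm_eq_sqrt] at hcs ⊢
  rw [twoNorm_eq_sqrt, Real.sqrt_le_left (by positivity), twoNormSq_add τ hstar, add_sq,
    Real.sq_sqrt ha, Real.sq_sqrt hb]
  linarith

lemma twoNorm_star (htr : ∀ a b : M, τ (a * b) = τ (b * a)) (a : M) :
    twoNorm τ (star a) = twoNorm τ a := by
  rw [twoNorm, star_star, htr, twoNorm]

end TwoNorm

lemma re_map_nonneg_of_nonneg {A : Type*} [Semiring A] [PartialOrder A] [StarRing A]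
    [StarOrderedRing A] [Module ℂ A] (τ : A →ₗ[ℂ] ℂ) (hpos : ∀ a : A, 0 ≤ (τ (star a * a)).re)
    {x : A} (hx : 0 ≤ x) : 0 ≤ (τ x).re := by
  rw [StarOrderedRing.nonneg_iff] at hx
  induction hx using AddSubmonoid.closure_induction with
  | mem s hs => obtain ⟨s, rfl⟩ := hs; exact hpos s
  | zero => simp
  | add x y _ _ hx hy => rw [map_add, Complex.add_re]; positivity

section CStar

variable {M : Type*} [NormedRing M] [StarRing M] [CStarRing M] [NormedAlgebra ℂ M]
  [StarModule ℂ M] [CompleteSpace M] (τ : M →ₗ[ℂ] ℂ)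

lemma twoNormSq_mul_le (hpos : ∀ a : M, 0 ≤ twoNormSq τ a)
    (a b : M) : twoNormSq τ (a * b) ≤ ‖a‖ ^ 2 * twoNormSq τ b := by
  let _ : CStarAlgebra M := { }
  let _ := CStarAlgebra.spectralOrder M
  have _ := CStarAlgebra.spectralOrderedRing M
  have hle := star_left_conjugate_le_conjugate
    (CStarAlgebra.star_mul_le_algebraMap_norm_sq (a := a)) b
  have hτ := re_map_nonneg_of_nonneg τ hpos (sub_nonneg.mpr hle)
  have hscalar : star b * algebraMap ℝ M (‖a‖ ^ 2) * b = ((‖a‖ ^ 2 : ℝ) : ℂ) • (star b * b) := by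
    rw [IsScalarTower.algebraMap_apply ℝ ℂ M, Algebra.algebraMap_eq_smul_one]
    simp
  rw [hscalar, map_sub, map_smul, smul_eq_mul, Complex.sub_re, Complex.re_ofReal_mul,
    sub_nonneg] at hτ
  simpa [twoNormSq, star_mul, mul_assoc] using hτ

lemma twoNorm_mul_le_left (hpos : ∀ a : M, 0 ≤ twoNormSq τ a)
    (a b : M) : twoNorm τ (a * b) ≤ ‖a‖ * twoNorm τ b := by
  rw [twoNorm_eq_sqrt, twoNorm_eq_sqrt, ← Real.sqrt_sq (norm_nonneg a),
    ← Real.sqrt_mul (sq_nonneg _)]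
  exact Real.sqrt_le_sqrt (twoNormSq_mul_le τ hpos a b)

lemma twoNorm_mul_le_right (hpos : ∀ a : M, 0 ≤ twoNormSq τ a)
    (htr : ∀ a b : M, τ (a * b) = τ (b * a)) (a b : M) :
    twoNorm τ (a * b) ≤ ‖b‖ * twoNorm τ a := by
  rw [← twoNorm_star τ htr, star_mul, ← norm_star b, ← twoNorm_star τ htr a]
  exact twoNorm_mul_le_left τ hpos _ _

lemma twoNorm_le_norm (hτ1 : τ 1 = 1)
    (hpos : ∀ a : M, 0 ≤ twoNormSq τ a) (a : M) :
    twoNorm τ a ≤ ‖a‖ := by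
  have hone : twoNorm τ (1 : M) = 1 := by simp [twoNorm, hτ1]
  simpa [hone] using twoNorm_mul_le_left τ hpos a 1

end CStar

section Cont2

variable {X M : Type*} [TopologicalSpace X] [NormedRing M] [StarRing M] [NormedAlgebra ℂ M]
  (τ : M →ₗ[ℂ] ℂ)

lemma cont2_iff_tendsto {f : X → M} :
    Cont2 τ f ↔ ∀ x₀, Tendsto (fun x => twoNorm τ (f x - f x₀)) (𝓝 x₀) (𝓝 0) := by
  simp only [Cont2, Metric.tendsto_nhds, Real.dist_eq, sub_zero,
    abs_of_nonneg (twoNorm_nonneg τ _), Filter.eventually_iff_exists_mem]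

lemma cont2_const (c : M) : Cont2 τ (fun _ : X => c) :=
  (cont2_iff_tendsto τ).mpr fun _ => by simp [twoNorm_zero]

lemma Cont2.add [StarModule ℂ M]
    (hpos : ∀ a : M, 0 ≤ twoNormSq τ a)
    (hstar : ∀ a : M, τ (star a) = starRingEnd ℂ (τ a)) {f g : X → M}
    (hf : Cont2 τ f) (hg : Cont2 τ g) : Cont2 τ (fun x => f x + g x) := by
  rw [cont2_iff_tendsto] at hf hg ⊢
  intro x₀
  refine squeeze_zero (fun _ => twoNorm_nonneg τ _) (fun x => ?_)
    (by simpa using (hf x₀).add (hg x₀))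
  rw [add_sub_add_comm]
  exact twoNorm_add_le τ hpos hstar _ _

lemma Cont2.mul [CStarRing M] [StarModule ℂ M] [CompleteSpace M]
    (hpos : ∀ a : M, 0 ≤ twoNormSq τ a)
    (htr : ∀ a b : M, τ (a * b) = τ (b * a))
    (hstar : ∀ a : M, τ (star a) = starRingEnd ℂ (τ a)) {f g : X → M} {C : ℝ}
    (hfC : ∀ x, ‖f x‖ ≤ C) (hf : Cont2 τ f) (hg : Cont2 τ g) :
    Cont2 τ (fun x => f x * g x) := by
  rw [cont2_iff_tendsto] at hf hg ⊢
  intro x₀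
  refine squeeze_zero (fun _ => twoNorm_nonneg τ _) (fun x => ?_)
    (by simpa using ((hg x₀).const_mul C).add ((hf x₀).const_mul ‖g x₀‖))
  have hsplit : f x * g x - f x₀ * g x₀ = f x * (g x - g x₀) + (f x - f x₀) * g x₀ := by
    noncomm_ring
  calc twoNorm τ (f x * g x - f x₀ * g x₀)
      ≤ twoNorm τ (f x * (g x - g x₀)) + twoNorm τ ((f x - f x₀) * g x₀) := by
        rw [hsplit]; exact twoNorm_add_le τ hpos hstar _ _
    _ ≤ ‖f x‖ * twoNorm τ (g x - g x₀) + ‖g x₀‖ * twoNorm τ (f x - f x₀) :=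
        add_le_add (twoNorm_mul_le_left τ hpos _ _) (twoNorm_mul_le_right τ hpos htr _ _)
    _ ≤ C * twoNorm τ (g x - g x₀) + ‖g x₀‖ * twoNorm τ (f x - f x₀) := by
        gcongr
        · exact twoNorm_nonneg τ _
        · exact hfC x

lemma Cont2.star (htr : ∀ a b : M, τ (a * b) = τ (b * a)) {f : X → M} (hf : Cont2 τ f) :
    Cont2 τ (fun x => star (f x)) := by
  simpa only [Cont2, ← star_sub, twoNorm_star τ htr] using hf

lemma Cont2.const_smul [StarModule ℂ M] (c : ℂ) {f : X → M} (hf : Cont2 τ f) :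
    Cont2 τ (fun x => c • f x) := by
  rw [cont2_iff_tendsto] at hf ⊢
  intro x₀
  simpa [← smul_sub, twoNorm_smul] using (hf x₀).const_mul ‖c‖

lemma cont2_of_forall_uniform_approx [CStarRing M] [StarModule ℂ M] [CompleteSpace M]
    (hτ1 : τ 1 = 1) (hpos : ∀ a : M, 0 ≤ twoNormSq τ a)
    (hstar : ∀ a : M, τ (star a) = starRingEnd ℂ (τ a)) {f : X → M}
    (happrox : ∀ ε > (0 : ℝ), ∃ g, Cont2 τ g ∧ ∀ x, ‖f x - g x‖ ≤ ε) : Cont2 τ f := by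
  intro x₀ ε hε
  obtain ⟨g, hg, hfg⟩ := happrox (ε / 3) (by positivity)
  obtain ⟨U, hU, hgU⟩ := hg x₀ (ε / 3) (by positivity)
  refine ⟨U, hU, fun x hx => ?_⟩
  have hclose : ∀ y, twoNorm τ (f y - g y) ≤ ε / 3 := fun y =>
    (twoNorm_le_norm τ hτ1 hpos _).trans (hfg y)
  have hsplit : f x - f x₀ = (f x - g x) + (g x - g x₀) - (f x₀ - g x₀) := by abel
  calc twoNorm τ (f x - f x₀)
      ≤ twoNorm τ (f x - g x) + twoNorm τ (g x - g x₀) + twoNorm τ (f x₀ - g x₀) := by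
        rw [hsplit, sub_eq_add_neg, ← twoNorm_neg τ (f x₀ - g x₀)]
        exact (twoNorm_add_le τ hpos hstar _ _).trans
          (add_le_add (twoNorm_add_le τ hpos hstar _ _) le_rfl)
    _ < ε / 3 + ε / 3 + ε / 3 := by
        linarith [hclose x, hclose x₀, hgU x hx]
    _ = ε := by ring

end Cont2

section CsigmaSet

variable {X M : Type*} [TopologicalSpace X] [NormedRing M] [StarRing M] [NormedAlgebra ℂ M]
  (τ : M →ₗ[ℂ] ℂ)

lemma const_mem_csigmaSet (c : M) : (fun _ : X => c) ∈ CsigmaSet X τ :=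
  ⟨⟨‖c‖, fun _ => le_rfl⟩, cont2_const τ c⟩

lemma add_mem_csigmaSet [StarModule ℂ M]
    (hpos : ∀ a : M, 0 ≤ twoNormSq τ a)
    (hstar : ∀ a : M, τ (star a) = starRingEnd ℂ (τ a)) {f g : X → M}
    (hf : f ∈ CsigmaSet X τ) (hg : g ∈ CsigmaSet X τ) : (fun x => f x + g x) ∈ CsigmaSet X τ := by
  obtain ⟨⟨Cf, hCf⟩, hf⟩ := hf
  obtain ⟨⟨Cg, hCg⟩, hg⟩ := hg
  exact ⟨⟨Cf + Cg, fun x => (norm_add_le _ _).trans (add_le_add (hCf x) (hCg x))⟩,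
    hf.add τ hpos hstar hg⟩

lemma mul_mem_csigmaSet [CStarRing M] [StarModule ℂ M] [CompleteSpace M]
    (hpos : ∀ a : M, 0 ≤ twoNormSq τ a)
    (htr : ∀ a b : M, τ (a * b) = τ (b * a))
    (hstar : ∀ a : M, τ (star a) = starRingEnd ℂ (τ a)) {f g : X → M}
    (hf : f ∈ CsigmaSet X τ) (hg : g ∈ CsigmaSet X τ) : (fun x => f x * g x) ∈ CsigmaSet X τ := by
  obtain ⟨⟨Cf, hCf⟩, hf⟩ := hf
  obtain ⟨⟨Cg, hCg⟩, hg⟩ := hg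
  refine ⟨⟨Cf * Cg, fun x => ?_⟩, hf.mul τ hpos htr hstar hCf hg⟩
  exact (norm_mul_le _ _).trans
    (mul_le_mul (hCf x) (hCg x) (norm_nonneg _) ((norm_nonneg _).trans (hCf x)))

lemma star_mem_csigmaSet [CStarRing M] (htr : ∀ a b : M, τ (a * b) = τ (b * a)) {f : X → M}
    (hf : f ∈ CsigmaSet X τ) : (fun x => star (f x)) ∈ CsigmaSet X τ := by
  obtain ⟨⟨C, hC⟩, hf⟩ := hf
  exact ⟨⟨C, fun x => (norm_star (f x)).trans_le (hC x)⟩, hf.star τ htr⟩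

lemma smul_mem_csigmaSet [StarModule ℂ M] (c : ℂ) {f : X → M} (hf : f ∈ CsigmaSet X τ) :
    (fun x => c • f x) ∈ CsigmaSet X τ := by
  obtain ⟨⟨C, hC⟩, hf⟩ := hf
  refine ⟨⟨‖c‖ * C, fun x => ?_⟩, hf.const_smul τ c⟩
  rw [norm_smul]
  exact mul_le_mul_of_nonneg_left (hC x) (norm_nonneg c)

lemma mem_csigmaSet_of_forall_uniform_approx [CStarRing M] [StarModule ℂ M] [CompleteSpace M]
    (hτ1 : τ 1 = 1) (hpos : ∀ a : M, 0 ≤ twoNormSq τ a)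
    (hstar : ∀ a : M, τ (star a) = starRingEnd ℂ (τ a)) {f : X → M}
    (happrox : ∀ ε > (0 : ℝ), ∃ g ∈ CsigmaSet X τ, ∀ x, ‖f x - g x‖ ≤ ε) :
    f ∈ CsigmaSet X τ := by
  obtain ⟨g, ⟨⟨C, hC⟩, -⟩, hfg⟩ := happrox 1 one_pos
  refine ⟨⟨1 + C, fun x => ?_⟩, cont2_of_forall_uniform_approx τ hτ1 hpos hstar fun ε hε => ?_⟩
  · calc ‖f x‖ = ‖(f x - g x) + g x‖ := by rw [sub_add_cancel]
      _ ≤ 1 + C := (norm_add_le _ _).trans (add_le_add (hfg x) (hC x))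
  · obtain ⟨g, hg, hfg⟩ := happrox ε hε
    exact ⟨g, hg.2, hfg⟩

end CsigmaSet

theorem stmt3_general {X M : Type*} [TopologicalSpace X]
    [NormedRing M] [StarRing M] [CStarRing M] [NormedAlgebra ℂ M]
    [StarModule ℂ M] [CompleteSpace M]
    (τ : M →ₗ[ℂ] ℂ)
    (hτ1 : τ 1 = 1)
    (htr : ∀ a b : M, τ (a * b) = τ (b * a))
    (hpos : ∀ a : M, 0 ≤ (τ (star a * a)).re ∧ (τ (star a * a)).im = 0)
    (hstar : ∀ a : M, τ (star a) = starRingEnd ℂ (τ a)) :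
    ((fun _ : X => (1 : M)) ∈ CsigmaSet X τ) ∧
    (∀ f ∈ CsigmaSet X τ, ∀ g ∈ CsigmaSet X τ, (fun x => f x + g x) ∈ CsigmaSet X τ) ∧
    (∀ f ∈ CsigmaSet X τ, ∀ g ∈ CsigmaSet X τ, (fun x => f x * g x) ∈ CsigmaSet X τ) ∧
    (∀ f ∈ CsigmaSet X τ, (fun x => star (f x)) ∈ CsigmaSet X τ) ∧
    (∀ (c : ℂ), ∀ f ∈ CsigmaSet X τ, (fun x => c • f x) ∈ CsigmaSet X τ) ∧
    (∀ f : X → M, (∀ ε > (0 : ℝ), ∃ g ∈ CsigmaSet X τ, ∀ x, ‖f x - g x‖ ≤ ε) →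
      f ∈ CsigmaSet X τ) := by
  have hpos' : ∀ a : M, 0 ≤ twoNormSq τ a := fun a => (hpos a).1
  exact ⟨const_mem_csigmaSet τ 1,
    fun _ hf _ hg => add_mem_csigmaSet τ hpos' hstar hf hg,
    fun _ hf _ hg => mul_mem_csigmaSet τ hpos' htr hstar hf hg,
    fun _ hf => star_mem_csigmaSet τ htr hf,
    fun c _ hf => smul_mem_csigmaSet τ c hf,
    fun _ happrox => mem_csigmaSet_of_forall_uniform_approx τ hτ1 hpos' hstar happrox⟩

/-- `C_σ(X,M)` is a unital C*-subalgebra of the bounded functions `X → M`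
with the supremum norm: it contains the unit, is closed under the *-algebra operations,
and is closed under uniform (sup-norm) limits. -/
theorem stmt3 {X M : Type*} [TopologicalSpace X] [CompactSpace X] [T2Space X]
    [NormedRing M] [StarRing M] [CStarRing M] [NormedAlgebra ℂ M]
    [StarModule ℂ M] [CompleteSpace M]
    (τ : M →ₗ[ℂ] ℂ)
    (hτ1 : τ 1 = 1)
    (htr : ∀ a b : M, τ (a * b) = τ (b * a))
    (hpos : ∀ a : M, 0 ≤ (τ (star a * a)).re ∧ (τ (star a * a)).im = 0)
    (hstar : ∀ a : M, τ (star a) = starRingEnd ℂ (τ a))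
    (hfaith : ∀ a : M, τ (star a * a) = 0 → a = 0) :
    ((fun _ : X => (1 : M)) ∈ CsigmaSet X τ) ∧
    (∀ f ∈ CsigmaSet X τ, ∀ g ∈ CsigmaSet X τ, (fun x => f x + g x) ∈ CsigmaSet X τ) ∧
    (∀ f ∈ CsigmaSet X τ, ∀ g ∈ CsigmaSet X τ, (fun x => f x * g x) ∈ CsigmaSet X τ) ∧
    (∀ f ∈ CsigmaSet X τ, (fun x => star (f x)) ∈ CsigmaSet X τ) ∧
    (∀ (c : ℂ), ∀ f ∈ CsigmaSet X τ, (fun x => c • f x) ∈ CsigmaSet X τ) ∧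
    (∀ f : X → M, (∀ ε > (0 : ℝ), ∃ g ∈ CsigmaSet X τ, ∀ x, ‖f x - g x‖ ≤ ε) →
      f ∈ CsigmaSet X τ) :=
  stmt3_general τ hτ1 htr hpos hstar
end

section
/- Let M be a W*-bundle over a compact Hausdorff space X with conditional expectation E, and let Y ⊆ X be closed. Set I_Y = {a ∈ M : E(a*a)(y) = 0 for all y ∈ Y}. Then I_Y is a closed two-sided ideal of M, I_Y = ⋂_{y∈Y} I_y, C(X) ∩ I_Y = C_0(X∖Y), and E maps I_Y into C_0(X∖Y), so E induces a conditional expectation E_Y : M/I_Y → C(X)/C_0(X∖Y) ≅ C(Y). -/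
/-!
The form `(a, b) ↦ E (star a * b) x` is positive and Hermitian, so by Cauchy–Schwarz
`E (star a * a) x = 0` forces `E (star a * b) x = 0` for all `b`. Together with the trace property
this turns `I_Y` into `{a | E (b * a) = 0 on Y for every b}`: a left ideal that is evidently closed,
a right ideal because `E (b * (a * m)) = E ((m * b) * a)`, and on which `E a = E (1 * a)` vanishes.
-/

/-- The kernel `I_x = {a ∈ M : E(a*a)(x) = 0}`. -/
def fibKer {X M : Type*} [TopologicalSpace X] [CompactSpace X] [NormedRing M] [StarRing M]
    [NormedAlgebra ℂ M] (E : M →ₗ[ℂ] C(X, ℂ)) (x : X) : Set M :=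
  {a | E (star a * a) x = 0}

/-- The ideal `I_Y = {a ∈ M : E(a*a)(y) = 0 for all y ∈ Y}`. -/
def resKer {X M : Type*} [TopologicalSpace X] [CompactSpace X] [NormedRing M] [StarRing M]
    [NormedAlgebra ℂ M] (E : M →ₗ[ℂ] C(X, ℂ)) (Y : Set X) : Set M :=
  {a | ∀ y ∈ Y, E (star a * a) y = 0}

open ComplexConjugate

theorem LinearMap.apply_star_mul_eq_zero_of_apply_star_mul_self_eq_zero
    {M : Type*} [Ring M] [StarRing M] [Algebra ℂ M] [StarModule ℂ M] (φ : M →ₗ[ℂ] ℂ)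
    (hpos : ∀ a, 0 ≤ (φ (star a * a)).re) (hstar : ∀ a, φ (star a) = conj (φ a))
    {a : M} (ha : φ (star a * a) = 0) (b : M) : φ (star a * b) = 0 := by
  let form : PreInnerProductSpace.Core ℂ M :=
    { inner := fun a b => φ (star a * b)
      conj_inner_symm := fun a b => by simp only [← hstar, star_mul, star_star]
      re_inner_nonneg := hpos
      add_left := fun a b c => by simp only [star_add, add_mul, map_add]
      smul_left := fun a b r => by simp [star_smul, map_smul] }
  have hcs := InnerProductSpace.Core.inner_mul_inner_self_le (c := form) a b
  rw [InnerProductSpace.Core.norm_inner_symm (c := form) b a] at hcs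
  change ‖φ (star a * b)‖ * ‖φ (star a * b)‖ ≤ (φ (star a * a)).re * _ at hcs
  rw [ha, Complex.zero_re, zero_mul] at hcs
  exact norm_eq_zero.mp (mul_self_eq_zero.mp (le_antisymm hcs (mul_self_nonneg _)))

section

variable {X M : Type*} [TopologicalSpace X] [Ring M] [Module ℂ M] {E : M →ₗ[ℂ] C(X, ℂ)}

variable (E) in
def leftKer (Y : Set X) : Ideal M where
  carrier := {a | ∀ y ∈ Y, ∀ b, E (b * a) y = 0}
  zero_mem' := by simp
  add_mem' ha hc y hy b := by simp [mul_add, ha y hy b, hc y hy b]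
  smul_mem' m a ha y hy b := by simpa [mul_assoc] using ha y hy (b * m)

theorem mul_mem_leftKer_right (htr : ∀ a b : M, E (a * b) = E (b * a)) {Y : Set X} {a : M}
    (ha : a ∈ leftKer E Y) (m : M) : a * m ∈ leftKer E Y := by
  intro y hy b
  rw [← mul_assoc, htr, ← mul_assoc]
  exact ha y hy (m * b)

theorem apply_eq_zero_of_mem_leftKer {Y : Set X} {a : M} (ha : a ∈ leftKer E Y) {y : X}
    (hy : y ∈ Y) : E a y = 0 := by
  simpa using ha y hy 1

theorem isClosed_leftKer [TopologicalSpace M] [ContinuousMul M] (hE : Continuous E) (Y : Set X) :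
    IsClosed (leftKer E Y : Set M) := by
  have : (leftKer E Y : Set M) = ⋂ y ∈ Y, ⋂ b, {a | E (b * a) y = 0} := by
    ext a
    simp [leftKer]
  rw [this]
  exact isClosed_biInter fun y _ => isClosed_iInter fun b => isClosed_eq
    ((continuous_eval_const y).comp (hE.comp (continuous_const.mul continuous_id)))
    continuous_const

end

section

variable {X M : Type*} [TopologicalSpace X] [CompactSpace X] [NormedRing M] [StarRing M]
  [NormedAlgebra ℂ M] {E : M →ₗ[ℂ] C(X, ℂ)}

theorem resKer_eq_leftKer [StarModule ℂ M] (hpos : ∀ (a : M) (x : X), 0 ≤ (E (star a * a) x).re)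
    (hstar : ∀ a : M, E (star a) = star (E a)) (htr : ∀ a b : M, E (a * b) = E (b * a))
    (Y : Set X) : resKer E Y = leftKer E Y := by
  ext a
  refine ⟨fun ha y hy b => ?_, fun ha y hy => ha y hy (star a)⟩
  let φ : M →ₗ[ℂ] ℂ := (ContinuousMap.evalCLM ℂ y).toLinearMap ∘ₗ E
  have hφ : φ (star (star a) * star a) = 0 := by
    change E _ y = 0
    rw [star_star, htr]
    exact ha y hy
  rw [htr, ← star_star a]
  exact φ.apply_star_mul_eq_zero_of_apply_star_mul_self_eq_zero (fun c => hpos c y)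
    (fun c => congr($(hstar c) y)) hφ b

theorem resKer_eq_biInter_fibKer (Y : Set X) : resKer E Y = ⋂ y ∈ Y, fibKer E y := by
  ext a
  simp [resKer, fibKer]

theorem starAlgHom_apply_mem_resKer_iff (ι : C(X, ℂ) →⋆ₐ[ℂ] M) (hEι : ∀ h, E (ι h) = h)
    (Y : Set X) (h : C(X, ℂ)) : ι h ∈ resKer E Y ↔ ∀ y ∈ Y, h y = 0 := by
  simp [resKer, ← map_star, ← map_mul, hEι]

end

theorem stmt10_general {X M : Type*} [TopologicalSpace X] [CompactSpace X]
    [NormedRing M] [StarRing M] [NormedAlgebra ℂ M]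
    [StarModule ℂ M]
    (E : M →ₗ[ℂ] C(X, ℂ))
    (htr : ∀ a b : M, E (a * b) = E (b * a))
    (hpos : ∀ (a : M) (x : X), 0 ≤ (E (star a * a) x).re ∧ (E (star a * a) x).im = 0)
    (hstar : ∀ a : M, E (star a) = star (E a))
    (hcontr : ∀ a : M, ‖E a‖ ≤ ‖a‖)
    -- the central unital embedding of C(X)
    (ι : C(X, ℂ) →⋆ₐ[ℂ] M)
    (hEι : ∀ h : C(X, ℂ), E (ι h) = h)
    (Y : Set X) :
    IsClosed (resKer E Y) ∧
    ((0 : M) ∈ resKer E Y ∧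
      (∀ a ∈ resKer E Y, ∀ b ∈ resKer E Y, a + b ∈ resKer E Y) ∧
      (∀ a ∈ resKer E Y, ∀ m : M, m * a ∈ resKer E Y ∧ a * m ∈ resKer E Y)) ∧
    (resKer E Y = ⋂ y ∈ Y, fibKer E y) ∧
    (∀ h : C(X, ℂ), ι h ∈ resKer E Y ↔ ∀ y ∈ Y, h y = 0) ∧
    (∀ a ∈ resKer E Y, ∀ y ∈ Y, E a y = 0) := by
  have hEcont : Continuous E :=
    AddMonoidHomClass.continuous_of_bound E 1 fun a => by simpa using hcontr a
  have hI := resKer_eq_leftKer (fun a x => (hpos a x).1) hstar htr Y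
  refine ⟨?_, ⟨?_, ?_, ?_⟩, resKer_eq_biInter_fibKer Y, starAlgHom_apply_mem_resKer_iff ι hEι Y,
    ?_⟩ <;> rw [hI]
  · exact isClosed_leftKer hEcont Y
  · exact (leftKer E Y).zero_mem
  · exact fun a ha b hb => (leftKer E Y).add_mem ha hb
  · exact fun a ha m => ⟨(leftKer E Y).mul_mem_left m ha, mul_mem_leftKer_right htr ha m⟩
  · exact fun a ha y hy => apply_eq_zero_of_mem_leftKer ha hy

/-- for a closed `Y ⊆ X`, `I_Y` is a closed two-sided ideal, equal to
`⋂_{y ∈ Y} I_y`; under the central embedding `ι : C(X) → M` one has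
`C(X) ∩ I_Y = C_0(X∖Y)`, and `E` maps `I_Y` into `C_0(X∖Y)` (so `E` induces a
conditional expectation `E_Y : M/I_Y → C(Y)`). -/
theorem stmt10 {X M : Type*} [TopologicalSpace X] [CompactSpace X] [T2Space X]
    [NormedRing M] [StarRing M] [CStarRing M] [NormedAlgebra ℂ M]
    [StarModule ℂ M] [CompleteSpace M]
    (E : M →ₗ[ℂ] C(X, ℂ))
    (hE1 : E 1 = 1)
    (htr : ∀ a b : M, E (a * b) = E (b * a))
    (hpos : ∀ (a : M) (x : X), 0 ≤ (E (star a * a) x).re ∧ (E (star a * a) x).im = 0)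
    (hstar : ∀ a : M, E (star a) = star (E a))
    (hfaith : ∀ a : M, E (star a * a) = 0 → a = 0)
    (hcontr : ∀ a : M, ‖E a‖ ≤ ‖a‖)
    -- the central unital embedding of C(X)
    (ι : C(X, ℂ) →⋆ₐ[ℂ] M)
    (hcentral : ∀ (h : C(X, ℂ)) (a : M), ι h * a = a * ι h)
    (hEι : ∀ h : C(X, ℂ), E (ι h) = h)
    (hmodule : ∀ (h : C(X, ℂ)) (a : M), E (ι h * a) = h * E a)
    (Y : Set X) (hY : IsClosed Y) :
    IsClosed (resKer E Y) ∧
    ((0 : M) ∈ resKer E Y ∧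
      (∀ a ∈ resKer E Y, ∀ b ∈ resKer E Y, a + b ∈ resKer E Y) ∧
      (∀ a ∈ resKer E Y, ∀ m : M, m * a ∈ resKer E Y ∧ a * m ∈ resKer E Y)) ∧
    (resKer E Y = ⋂ y ∈ Y, fibKer E y) ∧
    (∀ h : C(X, ℂ), ι h ∈ resKer E Y ↔ ∀ y ∈ Y, h y = 0) ∧
    (∀ a ∈ resKer E Y, ∀ y ∈ Y, E a y = 0) :=
  stmt10_general E htr hpos hstar hcontr ι hEι Y
end

section
/- Let (B,p) be a topological bundle of tracial von Neumann algebras over a compact Hausdorff space X (axioms (i)–(viii)), and let s_n : X → B be bounded continuous sections converging to a bounded section s : X → B in the uniform 2-norm, i.e. sup_{x∈X} ‖s_n(x) − s(x)‖_2 → 0. Then s is continuous. -/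
/-!
Write `t x = (t x - s M x) + s M x`. The first summand lies over `x` and has 2-norm below
a uniform `ε`; by axiom (vi) and compactness of `X`, every such element over a point near
`x₀` is close to the zero section at `x₀`. The second summand is close to `s M x₀` for `x`
near `x₀`, and `s M x₀` is close to `t x₀` once `M` is large, because convergence in 2-norm
within a fibre is convergence in `B`. Continuity of addition then puts `t x` near `t x₀`.
-/

open Filter Topology

structure FibrewiseAddCommGroup {X B : Type*} (p : B → X) (add : B → B → B) (neg : B → B)
    (zero : X → B) : Prop where
  p_add : ∀ b₁ b₂, p b₁ = p b₂ → p (add b₁ b₂) = p b₁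
  p_neg : ∀ b, p (neg b) = p b
  p_zero : ∀ x, p (zero x) = x
  protected add_comm : ∀ b₁ b₂, p b₁ = p b₂ → add b₁ b₂ = add b₂ b₁
  protected add_assoc : ∀ b₁ b₂ b₃, p b₁ = p b₂ → p b₂ = p b₃ →
    add (add b₁ b₂) b₃ = add b₁ (add b₂ b₃)
  protected add_zero : ∀ b, add b (zero (p b)) = b
  protected add_neg : ∀ b, add b (neg b) = zero (p b)

namespace FibrewiseAddCommGroup

variable {X B : Type*} {p : B → X} {add : B → B → B} {neg : B → B} {zero : X → B}

abbrev fibre (h : FibrewiseAddCommGroup p add neg zero) (x : X) :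
    AddCommGroup {b // p b = x} :=
  letI : Add {b // p b = x} :=
    ⟨fun a b => ⟨add a b, (h.p_add a b (a.2.trans b.2.symm)).trans a.2⟩⟩
  letI : Neg {b // p b = x} := ⟨fun a => ⟨neg a, (h.p_neg a).trans a.2⟩⟩
  letI : Zero {b // p b = x} := ⟨⟨zero x, h.p_zero x⟩⟩
  { nsmul := nsmulRec
    zsmul := zsmulRec
    add_assoc := by
      rintro ⟨a, rfl⟩ ⟨b, hb⟩ ⟨c, hc⟩
      exact Subtype.ext <| h.add_assoc a b c hb.symm (hb.trans hc.symm)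
    add_comm := by
      rintro ⟨a, rfl⟩ ⟨b, hb⟩
      exact Subtype.ext <| h.add_comm a b hb.symm
    add_zero := by
      rintro ⟨a, rfl⟩
      exact Subtype.ext <| h.add_zero a
    zero_add := by
      rintro ⟨a, rfl⟩
      exact Subtype.ext <| (h.add_comm _ a (h.p_zero _)).trans (h.add_zero a)
    neg_add_cancel := by
      rintro ⟨a, rfl⟩
      exact Subtype.ext <| (h.add_comm _ a (h.p_neg a)).trans (h.add_neg a) }

theorem zero_add (h : FibrewiseAddCommGroup p add neg zero) (b : B) : add (zero (p b)) b = b :=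
  congrArg Subtype.val (@_root_.zero_add _ (h.fibre (p b)).toAddZeroClass ⟨b, rfl⟩)

theorem sub_add_cancel (h : FibrewiseAddCommGroup p add neg zero) {a b : B} (hab : p a = p b) :
    add (add a (neg b)) b = a :=
  congrArg Subtype.val <|
    @_root_.sub_add_cancel _ (h.fibre (p a)).toAddGroup ⟨a, rfl⟩ ⟨b, hab.symm⟩

theorem neg_sub (h : FibrewiseAddCommGroup p add neg zero) {a b : B} (hab : p a = p b) :
    neg (add a (neg b)) = add b (neg a) :=
  congrArg Subtype.val <|
    @_root_.neg_sub _ (h.fibre (p a)).toSubtractionMonoid ⟨a, rfl⟩ ⟨b, hab.symm⟩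

end FibrewiseAddCommGroup

section Topology

variable {X B : Type*} [TopologicalSpace B] {p : B → X}

theorem exists_isOpen_add_subset {add : B → B → B}
    (hadd : Continuous fun q : {q : B × B // p q.1 = p q.2} => add q.1.1 q.1.2)
    {a b : B} (hab : p a = p b) {U : Set B} (hU : U ∈ 𝓝 (add a b)) :
    ∃ U₁ U₂ : Set B, IsOpen U₁ ∧ a ∈ U₁ ∧ IsOpen U₂ ∧ b ∈ U₂ ∧
      ∀ b₁ ∈ U₁, ∀ b₂ ∈ U₂, p b₁ = p b₂ → add b₁ b₂ ∈ U := by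
  have hpre := hadd.continuousAt (x := ⟨(a, b), hab⟩) hU
  rw [mem_map, nhds_subtype_eq_comap, mem_comap] at hpre
  obtain ⟨S, hS, hSU⟩ := hpre
  obtain ⟨U₁, U₂, hU₁, ha, hU₂, hb, hprod⟩ := mem_nhds_prod_iff'.1 hS
  exact ⟨U₁, U₂, hU₁, ha, hU₂, hb, fun b₁ h₁ b₂ h₂ h₁₂ =>
    @hSU ⟨(b₁, b₂), h₁₂⟩ (hprod (Set.mk_mem_prod h₁ h₂))⟩

variable [TopologicalSpace X] {zero : X → B} {n2 : B → ℝ}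

/-- Axiom (vi). Its nets are indexed by `Type`, so it cannot be applied to filters on `B` itself;
this is why the tube lemma below goes through sequences and compactness of `X`. -/
def TendstoZeroSectionOfN2TendstoZero (p : B → X) (zero : X → B) (n2 : B → ℝ) : Prop :=
  ∀ (ι : Type) (l : Filter ι) (b : ι → B) (x : X), Tendsto (fun i => p (b i)) l (𝓝 x) →
    Tendsto (fun i => n2 (b i)) l (𝓝 0) → Tendsto b l (𝓝 (zero x))

theorem exists_pos_forall_n2_lt_mem [CompactSpace X]
    (hvi : TendstoZeroSectionOfN2TendstoZero p zero n2)
    (hn2 : ∀ b, 0 ≤ n2 b) {O : Set B} (hO : IsOpen O) (hzero : ∀ x, zero x ∈ O) :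
    ∃ ε > 0, ∀ b, n2 b < ε → b ∈ O := by
  by_contra! h
  choose b hb hbO using fun k : ℕ => h (1 / (k + 1)) Nat.one_div_pos_of_nat
  obtain ⟨x, hx⟩ := exists_clusterPt_of_compactSpace (map (fun k => p (b k)) atTop)
  let l := atTop ⊓ comap (fun k => p (b k)) (𝓝 x)
  have : l.NeBot := by
    refine NeBot.of_map (m := fun k => p (b k)) ?_
    rw [Filter.push_pull, inf_comm]
    exact hx.neBot
  have hbx : Tendsto b l (𝓝 (zero x)) := hvi ℕ l b x (tendsto_comap.mono_left inf_le_right)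
    ((squeeze_zero (fun k => hn2 (b k)) (fun k => (hb k).le)
      tendsto_one_div_add_atTop_nhds_zero_nat).mono_left inf_le_left)
  obtain ⟨k, hk⟩ := (hbx.eventually (hO.mem_nhds (hzero x))).exists
  exact hbO k hk

theorem exists_nhds_forall_n2_lt_mem [CompactSpace X] [T2Space X] (hp : Continuous p)
    (hzero : Continuous zero) (hp_zero : ∀ x, p (zero x) = x)
    (hvi : TendstoZeroSectionOfN2TendstoZero p zero n2)
    (hn2 : ∀ b, 0 ≤ n2 b) {x₀ : X} {U : Set B} (hU : U ∈ 𝓝 (zero x₀)) :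
    ∃ W ∈ 𝓝 x₀, ∃ ε > 0, ∀ b, p b ∈ W → n2 b < ε → b ∈ U := by
  obtain ⟨K, hK, hKc, hKU⟩ := exists_mem_nhds_isClosed_subset <|
    hzero.continuousAt.preimage_mem_nhds <|
      isOpen_interior.mem_nhds (mem_interior_iff_mem_nhds.2 hU)
  -- enlarging `interior U` by all fibres over the open `Kᶜ` gives an open set containing the
  -- whole zero section
  obtain ⟨ε, hε, hO⟩ := exists_pos_forall_n2_lt_mem hvi hn2
    (isOpen_interior.union (hKc.isOpen_compl.preimage hp)) fun x => by
      by_cases hx : x ∈ K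
      · exact .inl (hKU hx)
      · exact .inr (by rwa [Set.mem_preimage, hp_zero])
  refine ⟨K, hK, ε, hε, fun b hb hbε => ?_⟩
  rcases hO b hbε with h | h
  · exact interior_subset h
  · exact absurd hb h

theorem tendsto_of_tendsto_n2_sub {add : B → B → B} {neg : B → B}
    (hadd : Continuous fun q : {q : B × B // p q.1 = p q.2} => add q.1.1 q.1.2)
    (hG : FibrewiseAddCommGroup p add neg zero)
    (hvi : TendstoZeroSectionOfN2TendstoZero p zero n2)
    {ι : Type} {l : Filter ι} {f : ι → B} {a : B} (hf : ∀ i, p (f i) = p a)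
    (h : Tendsto (fun i => n2 (add (f i) (neg a))) l (𝓝 0)) : Tendsto f l (𝓝 a) := by
  refine fun U hU => mem_map.2 ?_
  obtain ⟨U₁, U₂, hU₁, h0, -, ha, hU⟩ := exists_isOpen_add_subset hadd (hG.p_zero (p a))
    (by rwa [hG.zero_add] : U ∈ 𝓝 (add (zero (p a)) a))
  have hpd : ∀ i, p (add (f i) (neg a)) = p a := fun i =>
    (hG.p_add _ _ ((hf i).trans (hG.p_neg a).symm)).trans (hf i)
  have hd := hvi ι l _ (p a) (by simp only [hpd, tendsto_const_nhds]) h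
  filter_upwards [hd.eventually (hU₁.mem_nhds h0)] with i hi
  simpa only [Set.mem_preimage, hG.sub_add_cancel (hf i)] using hU _ hi a ha (hpd i)

end Topology

theorem stmt16_general {X B : Type*} [TopologicalSpace X] [CompactSpace X] [T2Space X]
    [TopologicalSpace B]
    (p : B → X) (hp : Continuous p)
    (add : B → B → B) (smul : ℂ → B → B)
    (zero one : X → B) (tr : B → ℂ) (n2 : B → ℝ)
    -- the operations preserve fibres
    (hp_add : ∀ b₁ b₂ : B, p b₁ = p b₂ → p (add b₁ b₂) = p b₁)
    (hp_smul : ∀ (c : ℂ) (b : B), p (smul c b) = p b)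
    (hp_zero : ∀ x : X, p (zero x) = x)
    -- fibrewise additive structure
    (hadd_comm : ∀ b₁ b₂ : B, p b₁ = p b₂ → add b₁ b₂ = add b₂ b₁)
    (hadd_assoc : ∀ b₁ b₂ b₃ : B, p b₁ = p b₂ → p b₂ = p b₃ →
      add (add b₁ b₂) b₃ = add b₁ (add b₂ b₃))
    (hadd_zero : ∀ b : B, add b (zero (p b)) = b)
    (hadd_neg : ∀ b : B, add b (smul (-1) b) = zero (p b))
    -- fibrewise norm and trace compatibility
    (hn2_smul : ∀ (c : ℂ) (b : B), n2 (smul c b) = ‖c‖ * n2 b)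
    (htr_n2 : ∀ b : B, ‖tr b‖ ≤ n2 b)
    -- axiom (i): addition is continuous on B ×_p B
    (hi : Continuous fun q : {q : B × B // p q.1 = p q.2} => add q.1.1 q.1.2)
    -- axiom (iv): the zero and unit sections are continuous
    (hiv : Continuous zero ∧ Continuous one)
    -- axiom (vi): nets with p(b_λ) → x and ‖b_λ‖₂ → 0 converge to 0_x
    (hvi : ∀ (ι : Type) (l : Filter ι) (b : ι → B) (x : X),
      Filter.Tendsto (fun i => p (b i)) l (nhds x) →
      Filter.Tendsto (fun i => n2 (b i)) l (nhds 0) →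
      Filter.Tendsto b l (nhds (zero x)))
    -- the sections s n are bounded and continuous
    (s : ℕ → X → B) (hs_sec : ∀ n x, p (s n x) = x)
    (hs_cont : ∀ n, Continuous (s n))
    -- t is a bounded section
    (t : X → B) (ht_sec : ∀ x, p (t x) = x)
    -- s n → t in the uniform 2-norm: sup_x ‖s n x − t x‖₂ → 0
    (hconv : ∀ ε > (0 : ℝ), ∃ N, ∀ n ≥ N, ∀ x, n2 (add (s n x) (smul (-1) (t x))) < ε) :
    Continuous t := by
  have hG : FibrewiseAddCommGroup p add (smul (-1)) zero :=
    ⟨hp_add, hp_smul (-1), hp_zero, hadd_comm, hadd_assoc, hadd_zero, hadd_neg⟩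
  have hn2 : ∀ b, 0 ≤ n2 b := fun b => (norm_nonneg _).trans (htr_n2 b)
  have hpt : ∀ x, Tendsto (fun n => s n x) atTop (𝓝 (t x)) := fun x =>
    tendsto_of_tendsto_n2_sub hi hG hvi (fun n => (hs_sec n x).trans (ht_sec x).symm) <|
      Metric.tendsto_atTop.2 fun ε hε => (hconv ε hε).imp fun N hN n hn => by
        simpa only [Real.dist_eq, sub_zero, abs_of_nonneg (hn2 _)] using hN n hn x
  refine continuous_iff_continuousAt.2 fun x₀ U hU => mem_map.2 ?_
  have hzt : add (zero x₀) (t x₀) = t x₀ := by simpa only [ht_sec] using hG.zero_add (t x₀)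
  obtain ⟨U₁, U₂, hU₁, h0, hU₂, ht, hU⟩ :=
    exists_isOpen_add_subset hi ((hp_zero x₀).trans (ht_sec x₀).symm) (hzt ▸ hU)
  obtain ⟨W, hW, ε, hε, hsmall⟩ :=
    exists_nhds_forall_n2_lt_mem hp hiv.1 hp_zero hvi hn2 (hU₁.mem_nhds h0)
  obtain ⟨N, hN⟩ := hconv ε hε
  obtain ⟨M, hM, hMN⟩ :=
    (((hpt x₀).eventually (hU₂.mem_nhds ht)).and (eventually_ge_atTop N)).exists
  filter_upwards [hW, (hs_cont M).continuousAt (hU₂.mem_nhds hM)] with x hxW hxM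
  have hts : p (t x) = p (s M x) := (ht_sec x).trans (hs_sec M x).symm
  have hpd : p (add (t x) (smul (-1) (s M x))) = x :=
    (hG.p_add _ _ (hts.trans (hp_smul _ _).symm)).trans (ht_sec x)
  have hd : n2 (add (t x) (smul (-1) (s M x))) < ε := by
    rw [← hG.neg_sub hts.symm, hn2_smul, norm_neg, norm_one, one_mul]
    exact hN M hMN x
  simpa only [Set.mem_preimage, hG.sub_add_cancel hts] using
    hU _ (hsmall _ (by rwa [hpd]) hd) _ hxM (hpd.trans (hs_sec M x).symm)

/-- let `(B, p)` be a topological bundle of tracial von Neumann algebras over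
a compact Hausdorff space `X` (fibrewise *-algebra operations `add`, `smul`, `mul`, `star'`,
zero and unit sections, trace `tr`, 2-norm `n2` and C*-norm `cn` satisfying axioms
(i)–(viii)), and let `s n` be bounded continuous sections converging in the uniform 2-norm
to a bounded section `t`. Then `t` is continuous. -/
theorem stmt16 {X B : Type*} [TopologicalSpace X] [CompactSpace X] [T2Space X]
    [TopologicalSpace B]
    (p : B → X) (hp : Continuous p) (hsurj : Function.Surjective p)
    (add : B → B → B) (smul : ℂ → B → B) (mul : B → B → B) (star' : B → B)
    (zero one : X → B) (tr : B → ℂ) (n2 : B → ℝ) (cn : B → ℝ)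
    -- the operations preserve fibres
    (hp_add : ∀ b₁ b₂ : B, p b₁ = p b₂ → p (add b₁ b₂) = p b₁)
    (hp_smul : ∀ (c : ℂ) (b : B), p (smul c b) = p b)
    (hp_mul : ∀ b₁ b₂ : B, p b₁ = p b₂ → p (mul b₁ b₂) = p b₁)
    (hp_star : ∀ b : B, p (star' b) = p b)
    (hp_zero : ∀ x : X, p (zero x) = x) (hp_one : ∀ x : X, p (one x) = x)
    -- fibrewise additive structure
    (hadd_comm : ∀ b₁ b₂ : B, p b₁ = p b₂ → add b₁ b₂ = add b₂ b₁)
    (hadd_assoc : ∀ b₁ b₂ b₃ : B, p b₁ = p b₂ → p b₂ = p b₃ →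
      add (add b₁ b₂) b₃ = add b₁ (add b₂ b₃))
    (hadd_zero : ∀ b : B, add b (zero (p b)) = b)
    (hadd_neg : ∀ b : B, add b (smul (-1) b) = zero (p b))
    (hsmul_one : ∀ b : B, smul 1 b = b)
    (hsmul_mul : ∀ (c c' : ℂ) (b : B), smul c (smul c' b) = smul (c * c') b)
    -- fibrewise norm and trace compatibility
    (hn2_zero : ∀ x : X, n2 (zero x) = 0)
    (hn2_add : ∀ b₁ b₂ : B, p b₁ = p b₂ → n2 (add b₁ b₂) ≤ n2 b₁ + n2 b₂)
    (hn2_smul : ∀ (c : ℂ) (b : B), n2 (smul c b) = ‖c‖ * n2 b)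
    (hn2_le_cn : ∀ b : B, n2 b ≤ cn b)
    (hcn_nonneg : ∀ b : B, 0 ≤ cn b)
    (htr_n2 : ∀ b : B, ‖tr b‖ ≤ n2 b)
    -- axiom (i): addition is continuous on B ×_p B
    (hi : Continuous fun q : {q : B × B // p q.1 = p q.2} => add q.1.1 q.1.2)
    -- axiom (ii): scalar multiplication is continuous
    (hii : Continuous fun q : ℂ × B => smul q.1 q.2)
    -- axiom (iii): the involution is continuous
    (hiii : Continuous star')
    -- axiom (iv): the zero and unit sections are continuous
    (hiv : Continuous zero ∧ Continuous one)
    -- axiom (v): the trace and the 2-norm are continuous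
    (hv : Continuous tr ∧ Continuous n2)
    -- axiom (vi): nets with p(b_λ) → x and ‖b_λ‖₂ → 0 converge to 0_x
    (hvi : ∀ (ι : Type) (l : Filter ι) (b : ι → B) (x : X),
      Filter.Tendsto (fun i => p (b i)) l (nhds x) →
      Filter.Tendsto (fun i => n2 (b i)) l (nhds 0) →
      Filter.Tendsto b l (nhds (zero x)))
    -- axiom (vii): multiplication is continuous on C*-norm bounded subsets
    (hvii : ∀ K : ℝ, ContinuousOn (fun q : {q : B × B // p q.1 = p q.2} => mul q.1.1 q.1.2)
      {q | cn q.1.1 ≤ K ∧ cn q.1.2 ≤ K})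
    -- axiom (viii): p restricted to the C*-norm unit ball is open
    (hviii : ∀ W : Set B, IsOpen W → IsOpen (p '' (W ∩ {b | cn b ≤ 1})))
    -- the sections s n are bounded and continuous
    (s : ℕ → X → B) (hs_sec : ∀ n x, p (s n x) = x)
    (hs_cont : ∀ n, Continuous (s n))
    (hs_bdd : ∀ n, ∃ C : ℝ, ∀ x, cn (s n x) ≤ C)
    -- t is a bounded section
    (t : X → B) (ht_sec : ∀ x, p (t x) = x) (ht_bdd : ∃ C : ℝ, ∀ x, cn (t x) ≤ C)
    -- s n → t in the uniform 2-norm: sup_x ‖s n x − t x‖₂ → 0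
    (hconv : ∀ ε > (0 : ℝ), ∃ N, ∀ n ≥ N, ∀ x, n2 (add (s n x) (smul (-1) (t x))) < ε) :
    Continuous t :=
  stmt16_general p hp add smul zero one tr n2 hp_add hp_smul hp_zero hadd_comm hadd_assoc hadd_zero
    hadd_neg hn2_smul htr_n2 hi hiv hvi s hs_sec hs_cont t ht_sec hconv
end
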